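/- arXiv:2004.08213 — 2 statements merged into one kernel-verified Lean document; each statement's English description precedes it below -/
import Mathlib

section
/- Firing-language characterization of the exclusive-choice (×) pattern: under the hypotheses below, the set of firing sequences of N from the marking •t₁ to the marking t₁• is exactly the set of singleton sequences over the pattern members, i.e., ℒ_N(N, •t₁, t₁•) = {⟨t₁⟩, ⟨t₂⟩, ..., ⟨tₙ⟩}. -/
/-- A Petri net over a type `P` of places and a (disjoint) type `T` of
transitions, given by its flow relation `F ⊆ (P × T) ∪ (T × P)`,
represented as the two sets `pt` and `tp` of arcs. -/
structure PetriNet (P T : Type*) where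
  pt : Set (P × T)
  tp : Set (T × P)

variable {P T : Type*}

/-- The pre-set `•t` of a transition. -/
def preT (N : PetriNet P T) (t : T) : Set P := {p | (p, t) ∈ N.pt}

/-- The post-set `t•` of a transition. -/
def postT (N : PetriNet P T) (t : T) : Set P := {p | (t, p) ∈ N.tp}

/-- The pre-set `•p` of a place. -/
def preP (N : PetriNet P T) (p : P) : Set T := {t | (t, p) ∈ N.tp}

/-- The post-set `p•` of a place. -/
def postP (N : PetriNet P T) (p : P) : Set T := {t | (p, t) ∈ N.pt}

/-- A marking is a multiset over the places, i.e., a function `P → ℕ`. A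
transition `t` is enabled at `M` iff `M p > 0` for every `p ∈ •t`. -/
def Enabled (N : PetriNet P T) (M : P → ℕ) (t : T) : Prop :=
  ∀ p ∈ preT N t, 0 < M p

/-- Firing transition `t` transforms `M` into `(M \ •t) ⊎ t•`. -/
noncomputable def fire (N : PetriNet P T) (t : T) (M : P → ℕ) : P → ℕ :=
  fun p => M p - (preT N t).indicator 1 p + (postT N t).indicator 1 p

/-- `FSeq N M σ M'` : `σ` is a firing sequence of `N` from marking `M` to
marking `M'`. -/
inductive FSeq (N : PetriNet P T) : (P → ℕ) → List T → (P → ℕ) → Prop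
  | nil (M : P → ℕ) : FSeq N M [] M
  | cons (M : P → ℕ) (t : T) (σ : List T) (M' : P → ℕ) :
      Enabled N M t → FSeq N (fire N t M) σ M' → FSeq N M (t :: σ) M'

/-- The marking identifying a (finite) set of places with one token on each
of its elements. -/
noncomputable def mark (S : Set P) : P → ℕ := S.indicator 1


/-- Firing a transition at the marking of its pre-set yields the marking of
its post-set. -/
lemma fire_mark (N : PetriNet P T) (u : T) :
    fire N u (mark (preT N u)) = mark (postT N u) := by
  funext p
  simp only [fire, mark, Set.indicator, Pi.one_apply]
  by_cases hp : p ∈ preT N u <;> by_cases hq : p ∈ postT N u <;> simp [hp, hq]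

/-- Counting lemma: if some place `q` lies in the post-set but not the
pre-set of every transition, its token count grows by one per firing. -/
lemma count_lemma (N : PetriNet P T) (q : P)
    (hq : ∀ u : T, q ∉ preT N u ∧ q ∈ postT N u)
    {M M' : P → ℕ} {σ : List T} (h : FSeq N M σ M') :
    M' q = M q + σ.length := by
  induction h with
  | nil M => simp
  | cons M u σ M' hen hs ih =>
      have h1 := (hq u).1
      have h2 := (hq u).2
      simp only [ih, fire, Set.indicator, Pi.one_apply, h2, if_pos]
      simp [h1]
      omega

/-- From a dead marking, only the empty firing sequence is possible. -/
lemma no_step (N : PetriNet P T) (M : P → ℕ)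
    (hdead : ∀ u : T, ¬ Enabled N M u) {σ : List T} {M' : P → ℕ}
    (h : FSeq N M σ M') : σ = [] ∧ M' = M := by
  cases h with
  | nil => exact ⟨rfl, rfl⟩
  | cons _ u σ' _ hen _ => exact absurd hen (hdead u)

/-- Firing-language characterization of the exclusive-choice (×) pattern:
under the pattern hypotheses, the set of firing sequences of `N` from the
marking `•t₁` to the marking `t₁•` is exactly `{⟨t₁⟩, ..., ⟨tₙ⟩}`. -/
theorem xor_pattern_lang (P T : Type*) [Finite P] [Finite T]
    (N : PetriNet P T) (n : ℕ) (t : ℕ → T)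
    (hn : 2 ≤ n)
    -- the transition set is exactly the pairwise-distinct `t 0, ..., t (n-1)`
    (hsurj : ∀ u : T, ∃ i < n, u = t i)
    (hinj : ∀ i < n, ∀ j < n, t i = t j → i = j)
    -- the place set is exactly `•t₁ ∪ t₁•`
    (hplaces : ∀ p : P, p ∈ preT N (t 0) ∨ p ∈ postT N (t 0))
    -- all pre-sets coincide
    (hpre : ∀ i < n, preT N (t i) = preT N (t 0))
    -- all post-sets coincide
    (hpost : ∀ i < n, postT N (t i) = postT N (t 0))
    -- no self-loops: `•t₁ ≠ t₁•`
    (hne : preT N (t 0) ≠ postT N (t 0))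
    (h0 : (preT N (t 0)).Nonempty)
    (h1 : (postT N (t 0)).Nonempty) :
    {σ | FSeq N (mark (preT N (t 0))) σ (mark (postT N (t 0)))} =
      {σ : List T | ∃ i < n, σ = [t i]} := by
  ext σ
  simp only [Set.mem_setOf_eq]
  set A := preT N (t 0) with hA
  set B := postT N (t 0) with hB
  have hpreAll : ∀ u : T, preT N u = A := by
    intro u; obtain ⟨i, hi, rfl⟩ := hsurj u; exact hpre i hi
  have hpostAll : ∀ u : T, postT N u = B := by
    intro u; obtain ⟨i, hi, rfl⟩ := hsurj u; exact hpost i hi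
  have hfire : ∀ u : T, fire N u (mark A) = mark B := by
    intro u
    have := fire_mark N u
    rwa [hpreAll u, hpostAll u] at this
  have hmarkne : mark A ≠ mark B := by
    intro h
    apply hne
    ext p
    have := congrFun h p
    simp only [mark, Set.indicator, Pi.one_apply] at this
    constructor <;> intro hx <;> by_contra hy <;> simp [hx, hy] at this
  constructor
  · intro h
    have key : ∀ (M M' : P → ℕ) (σ' : List T), FSeq N M σ' M' →
        M = mark A → M' = mark B → ∃ i < n, σ' = [t i] := by
      intro M M' σ' hseq
      cases hseq with
      | nil =>
        intro h1 h2
        exact absurd (h1.symm.trans h2) hmarkne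
      | cons M u σ'' M'' hen hs =>
        rintro rfl rfl
        rw [hfire u] at hs
        obtain ⟨i, hi, rfl⟩ := hsurj u
        refine ⟨i, hi, ?_⟩
        suffices hσ : σ'' = [] by rw [hσ]
        by_cases hAB : ∃ p, p ∈ A ∧ p ∉ B
        · obtain ⟨p, hpA, hpB⟩ := hAB
          have hdead : ∀ v : T, ¬ Enabled N (mark B) v := by
            intro v hv
            have := hv p (by rw [hpreAll v]; exact hpA)
            simp [mark, Set.indicator, hpB] at this
          exact (no_step N _ hdead hs).1
        · push_neg at hAB
          have hq : ∃ q, q ∈ B ∧ q ∉ A := by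
            by_contra hc
            push_neg at hc
            exact hne (Set.Subset.antisymm hAB hc)
          obtain ⟨q, hqB, hqA⟩ := hq
          have := count_lemma N q (fun v => ⟨by rw [hpreAll v]; exact hqA,
            by rw [hpostAll v]; exact hqB⟩) hs
          simpa using this.symm
    exact key _ _ _ h rfl rfl
  · rintro ⟨i, hi, rfl⟩
    refine FSeq.cons _ _ _ _ ?_ ?_
    · intro p hp
      rw [hpreAll (t i)] at hp
      simp [mark, Set.indicator, hp]
    · rw [hfire (t i)]
      exact FSeq.nil _
end

section
/- Firing-language characterization of the loop (↺) pattern: under the hypotheses below, the set of firing sequences of N from the marking •t₁ to the marking t₁• is exactly {⟨t₁⟩ · (⟨t₂, t₁⟩)^k | k ≥ 0}, i.e., the sequences that start with t₁, alternate t₂ and t₁, and end with t₁. -/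
variable {P T : Type*}

/-- `loopSeq t₁ t₂ k = ⟨t₁⟩ · (⟨t₂, t₁⟩)^k`: the sequence starting with `t₁`,
alternating `t₂` and `t₁`, and ending with `t₁`. -/
def loopSeq (t₁ t₂ : T) : ℕ → List T
  | 0 => [t₁]
  | k + 1 => loopSeq t₁ t₂ k ++ [t₂, t₁]


lemma FSeq_nil_eq {N : PetriNet P T} {M M' : P → ℕ} (h : FSeq N M [] M') : M = M' := by
  cases h; rfl

lemma FSeq_cons_inv {N : PetriNet P T} {M M' : P → ℕ} {t : T} {σ : List T}
    (h : FSeq N M (t :: σ) M') : Enabled N M t ∧ FSeq N (fire N t M) σ M' := by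
  cases h; exact ⟨‹_›, ‹_›⟩

/-- `rep2 t₁ t₂ k = (⟨t₂, t₁⟩)^k`. -/
def rep2 (t₁ t₂ : T) : ℕ → List T
  | 0 => []
  | k + 1 => t₂ :: t₁ :: rep2 t₁ t₂ k

lemma rep2_append (t₁ t₂ : T) (k : ℕ) :
    rep2 t₁ t₂ k ++ [t₂, t₁] = rep2 t₁ t₂ (k + 1) := by
  induction k with
  | zero => rfl
  | succ k ih => simp only [rep2, List.cons_append, ih]

lemma loopSeq_eq_rep2 (t₁ t₂ : T) (k : ℕ) :
    loopSeq t₁ t₂ k = t₁ :: rep2 t₁ t₂ k := by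
  induction k with
  | zero => rfl
  | succ k ih => rw [loopSeq, ih, List.cons_append, rep2_append]

/-- Firing-language characterization of the loop (↺) pattern: under the
pattern hypotheses, the set of firing sequences of `N` from the marking `•t₁`
to the marking `t₁•` is exactly `{⟨t₁⟩ · (⟨t₂, t₁⟩)^k | k ≥ 0}`. -/
theorem loop_pattern_lang (P T : Type*) [Finite P] [Finite T]
    (N : PetriNet P T) (t₁ t₂ : T)
    (hne : t₁ ≠ t₂)
    -- the transition set is exactly `{t₁, t₂}`
    (hsurj : ∀ u : T, u = t₁ ∨ u = t₂)
    -- the place set is exactly `•t₁ ∪ t₁•`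
    (hplaces : ∀ p : P, p ∈ preT N t₁ ∨ p ∈ postT N t₁)
    -- `•t₁ = t₂•` and `t₁• = •t₂`
    (h1 : preT N t₁ = postT N t₂)
    (h2 : postT N t₁ = preT N t₂)
    -- pre-sets are disjoint, post-sets are disjoint
    (h3 : preT N t₁ ∩ preT N t₂ = ∅)
    (h4 : postT N t₁ ∩ postT N t₂ = ∅)
    (h5 : (preT N t₁).Nonempty)
    (h6 : (postT N t₁).Nonempty) :
    {σ | FSeq N (mark (preT N t₁)) σ (mark (postT N t₁))} =
      {σ : List T | ∃ k : ℕ, σ = loopSeq t₁ t₂ k} := by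

  have hdisj : ∀ p, p ∈ preT N t₁ → p ∉ postT N t₁ := by
    intro p hp hq
    have : p ∈ preT N t₁ ∩ preT N t₂ := ⟨hp, h2 ▸ hq⟩
    rw [h3] at this; exact this
  obtain ⟨p₀, hp₀⟩ := h5
  obtain ⟨q₀, hq₀⟩ := h6
  set A := mark (preT N t₁) with hA
  set B := mark (postT N t₁) with hB
  have fireA : fire N t₁ A = B := by
    funext p
    simp [fire, hA, hB, mark, Nat.sub_self]
  have fireB : fire N t₂ B = A := by
    funext p
    simp [fire, hA, hB, mark, ← h1, ← h2, Nat.sub_self]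
  have enA : Enabled N A t₁ := by
    intro p hp
    simp [hA, mark, Set.indicator_of_mem hp]
  have enB : Enabled N B t₂ := by
    intro p hp
    rw [← h2] at hp
    simp [hB, mark, Set.indicator_of_mem hp]
  have nenA : ¬ Enabled N A t₂ := by
    intro h
    have hq : q₀ ∈ preT N t₂ := h2 ▸ hq₀
    have := h q₀ hq
    have hnot : q₀ ∉ preT N t₁ := fun hmem => hdisj q₀ hmem hq₀
    simp [hA, mark, Set.indicator_of_notMem hnot] at this
  have nenB : ¬ Enabled N B t₁ := by
    intro h
    have := h p₀ hp₀
    have hnot : p₀ ∉ postT N t₁ := hdisj p₀ hp₀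
    simp [hB, mark, Set.indicator_of_notMem hnot] at this
  have hABne : A ≠ B := by
    intro h
    have := congrFun h p₀
    have hnot : p₀ ∉ postT N t₁ := hdisj p₀ hp₀
    simp [hA, hB, mark, Set.indicator_of_mem hp₀, Set.indicator_of_notMem hnot] at this
  have key : ∀ n (σ : List T), σ.length ≤ n →
      (FSeq N A σ B → ∃ k, σ = loopSeq t₁ t₂ k) ∧
      (FSeq N B σ B → ∃ k, σ = rep2 t₁ t₂ k) := by
    intro n
    induction n with
    | zero =>
      intro σ hlen
      have hσ : σ = [] := List.length_eq_zero_iff.mp (Nat.le_zero.mp hlen)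
      subst hσ
      constructor
      · intro h
        exact absurd (FSeq_nil_eq h) hABne
      · intro _
        exact ⟨0, rfl⟩
    | succ n ih =>
      intro σ hlen
      rcases σ with _ | ⟨t, σ'⟩
      · constructor
        · intro h
          exact absurd (FSeq_nil_eq h) hABne
        · intro _
          exact ⟨0, rfl⟩
      · have hlen' : σ'.length ≤ n := by simp at hlen; omega
        constructor
        · intro h
          obtain ⟨hen, hrest⟩ := FSeq_cons_inv h
          rcases hsurj t with rfl | rfl
          · rw [fireA] at hrest
            obtain ⟨k, hk⟩ := (ih σ' hlen').2 hrest
            exact ⟨k, by rw [hk, loopSeq_eq_rep2]⟩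
          · exact absurd hen nenA
        · intro h
          obtain ⟨hen, hrest⟩ := FSeq_cons_inv h
          rcases hsurj t with rfl | rfl
          · exact absurd hen nenB
          · rw [fireB] at hrest
            obtain ⟨k, hk⟩ := (ih σ' hlen').1 hrest
            rw [loopSeq_eq_rep2] at hk
            exact ⟨k + 1, by rw [hk]; rfl⟩
  have fwdB : ∀ k, FSeq N B (rep2 t₁ t₂ k) B := by
    intro k
    induction k with
    | zero => exact FSeq.nil B
    | succ k ihk =>
      exact FSeq.cons _ _ _ _ enB (by
        rw [fireB]
        exact FSeq.cons _ _ _ _ enA (by rw [fireA]; exact ihk))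
  ext σ
  simp only [Set.mem_setOf_eq]
  constructor
  · intro h
    exact (key σ.length σ le_rfl).1 h
  · rintro ⟨k, rfl⟩
    rw [loopSeq_eq_rep2]
    exact FSeq.cons _ _ _ _ enA (by rw [fireA]; exact fwdB k)
end
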